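/- (⊕_ω ℤ) ⊕ ℤ^ω is not isomorphic to ℤ^ω. -/

import Mathlib

/-!
Specker: a homomorphism `f : ℤ^ℕ → ℤ` is determined by the values `f eₙ`, only finitely many of
which are nonzero. Both facts come from the congruence `f x ≡ ∑_{n<K} xₙ f eₙ (mod d)` whenever
`d ∣ xₙ` for all `n ≥ K`. Writing `x = (2ⁿ uₙ) + (3ⁿ vₙ)` shows that `f = 0` once it kills every
`eₙ`. If instead `cₙ = f eₙ ≠ 0` for all `n`, take `x = (Dₙ)` with `Dₙ ∣ Dₙ₊₁` growing so fast
that the partial sums `∑_{n<K} Dₙ cₙ` stay below `D_K / 2`; then they eventually all equal `f x`,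
forcing `D_K c_K = 0`.

Hence `Hom(ℤ^ℕ, ℤ)` embeds into `⊕_ℕ ℤ` and is countable, whereas `Hom((⊕_ℕ ℤ) × ℤ^ℕ, ℤ)`
contains a copy of `Hom(⊕_ℕ ℤ, ℤ) ≅ ℤ^ℕ`, which is uncountable.
-/

open Finset Function

theorem Function.extend_pi_single {ι η M : Type*} [DecidableEq ι] [DecidableEq η] [Zero M]
    {ν : ι → η} (hν : Injective ν) (i : ι) (m : M) :
    extend ν (Pi.single i m) 0 = Pi.single (ν i) m := by
  funext b
  by_cases hb : ∃ a, ν a = b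
  · obtain ⟨a, rfl⟩ := hb
    simp [hν.extend_apply, Pi.single_apply, hν.eq_iff]
  · rw [extend_apply' _ _ _ hb, Pi.single_apply, if_neg (fun h => hb ⟨i, h.symm⟩)]
    rfl

section SpeckerWeight

variable (c : ℕ → ℤ)

def speckerWeight (K : ℕ) : ℤ := ∏ k ∈ Finset.range K, 2 * (|c k| + 1)

theorem speckerWeight_succ (K : ℕ) :
    speckerWeight c (K + 1) = speckerWeight c K * (2 * (|c K| + 1)) :=
  prod_range_succ _ _

theorem two_pow_le_speckerWeight (K : ℕ) : 2 ^ K ≤ speckerWeight c K := by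
  induction K with
  | zero => simp [speckerWeight]
  | succ K ih =>
    rw [speckerWeight_succ, pow_succ]
    have : 0 ≤ 2 ^ K := by positivity
    nlinarith [abs_nonneg (c K)]

theorem speckerWeight_pos (K : ℕ) : 0 < speckerWeight c K :=
  lt_of_lt_of_le (by positivity) (two_pow_le_speckerWeight c K)

theorem speckerWeight_dvd {K L : ℕ} (h : K ≤ L) : speckerWeight c K ∣ speckerWeight c L :=
  prod_dvd_prod_of_subset _ _ _ (range_subset_range.2 h)

theorem two_mul_abs_sum_lt_speckerWeight (K : ℕ) :
    2 * |∑ k ∈ range K, speckerWeight c k * c k| < speckerWeight c K := by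
  induction K with
  | zero => simp [speckerWeight]
  | succ K ih =>
    rw [sum_range_succ, speckerWeight_succ]
    have hD := speckerWeight_pos c K
    have htri := abs_add_le (∑ k ∈ range K, speckerWeight c k * c k) (speckerWeight c K * c K)
    rw [abs_mul, abs_of_pos hD] at htri
    linarith

end SpeckerWeight

namespace AddMonoidHom

theorem dvd_map_sub_sum {ι : Type*} [DecidableEq ι] (f : (ι → ℤ) →+ ℤ) (s : Finset ι) {d : ℤ}
    {x : ι → ℤ} (hx : ∀ i ∉ s, d ∣ x i) : d ∣ f x - ∑ i ∈ s, x i * f (Pi.single i 1) := by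
  let y : ι → ℤ := fun i => if i ∈ s then 0 else x i / d
  have hsplit : x = ∑ i ∈ s, x i • Pi.single i 1 + d • y := by
    funext i
    by_cases hi : i ∈ s
    · simp [y, hi, Finset.sum_apply, Pi.single_apply]
    · simp [y, hi, Int.mul_ediv_cancel' (hx i hi), Finset.sum_apply, Pi.single_apply]
  have hfx : f x = ∑ i ∈ s, x i * f (Pi.single i 1) + d * f y := by
    conv_lhs => rw [hsplit]
    simp only [map_add, map_sum, map_zsmul, smul_eq_mul]
  exact ⟨f y, by rw [hfx, add_sub_cancel_left]⟩

theorem eq_zero_of_map_single_eq_zero {f : (ℕ → ℤ) →+ ℤ} (hf : ∀ n, f (Pi.single n 1) = 0) :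
    f = 0 := by
  have vanish_geom : ∀ p : ℤ, p.natAbs ≠ 1 → ∀ u : ℕ → ℤ, f (fun n => p ^ n * u n) = 0 := by
    intro p hp u
    by_contra hne
    obtain ⟨K, hK⟩ := Int.finiteMultiplicity_iff.2 ⟨hp, hne⟩
    refine hK ?_
    simpa [hf] using f.dvd_map_sub_sum (Finset.range (K + 1))
      fun n hn => (pow_dvd_pow p (by simpa using hn)).mul_right _
  have bezout : ∀ n, ∃ uv : ℤ × ℤ, 2 ^ n * uv.1 + 3 ^ n * uv.2 = 1 := fun n => by
    obtain ⟨a, b, hab⟩ := (show IsCoprime (2 : ℤ) 3 by norm_num [Int.isCoprime_iff_gcd_eq_one]).pow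
      (m := n) (n := n)
    exact ⟨(a, b), by linear_combination hab⟩
  choose uv huv using bezout
  ext x
  have hx : x = (fun n => 2 ^ n * ((uv n).1 * x n)) + fun n => 3 ^ n * ((uv n).2 * x n) := by
    funext n
    simp only [Pi.add_apply]
    linear_combination (-x n) * huv n
  rw [hx, map_add, vanish_geom 2 (by decide), vanish_geom 3 (by decide), add_zero, zero_apply]

theorem exists_map_single_eq_zero (f : (ℕ → ℤ) →+ ℤ) : ∃ n, f (Pi.single n 1) = 0 := by
  by_contra! hc
  set c : ℕ → ℤ := fun n => f (Pi.single n 1)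
  set D := speckerWeight c
  set s : ℕ → ℤ := fun K => ∑ k ∈ Finset.range K, D k * c k
  have hcong : ∀ K, D K ∣ f D - s K := fun K =>
    f.dvd_map_sub_sum (Finset.range K) fun n hn => speckerWeight_dvd c (by simpa using hn)
  obtain ⟨M, hM⟩ : ∃ M : ℕ, 2 * |f D| < 2 ^ M := pow_unbounded_of_one_lt _ one_lt_two
  have hstable : ∀ K, M ≤ K → f D = s K := by
    intro K hK
    have h1 : 2 * |f D| < D K :=
      hM.trans_le ((pow_le_pow_right₀ (by norm_num) hK).trans (two_pow_le_speckerWeight c K))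
    have h2 := two_mul_abs_sum_lt_speckerWeight c K
    have h3 := abs_sub (f D) (s K)
    exact sub_eq_zero.1 (Int.eq_zero_of_abs_lt_dvd (hcong K) (by linarith))
  have hstep : s (M + 1) = s M + D M * c M := sum_range_succ _ _
  have : D M * c M = 0 := by linarith [hstable M le_rfl, hstable (M + 1) (by omega)]
  exact hc M ((mul_eq_zero.1 this).resolve_left (speckerWeight_pos c M).ne')

theorem finite_support_map_single (f : (ℕ → ℤ) →+ ℤ) :
    (support fun n => f (Pi.single n 1)).Finite := by
  by_contra hinf
  let ν := Set.Infinite.natEmbedding _ hinf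
  have hν : Injective fun k => (ν k : ℕ) := Subtype.val_injective.comp ν.injective
  obtain ⟨k, hk⟩ := exists_map_single_eq_zero (f.comp (ExtendByZero.hom ℤ fun k => (ν k : ℕ)))
  have hsingle : ExtendByZero.hom ℤ (fun k => (ν k : ℕ)) (Pi.single k 1) = Pi.single (ν k : ℕ) 1 :=
    extend_pi_single hν k 1
  rw [comp_apply, hsingle] at hk
  exact (ν k).2 hk

theorem ext_pi_int {f g : (ℕ → ℤ) →+ ℤ} (h : ∀ n, f (Pi.single n 1) = g (Pi.single n 1)) :
    f = g :=
  sub_eq_zero.1 <| eq_zero_of_map_single_eq_zero fun n => by simp [h n]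

end AddMonoidHom

theorem countable_addMonoidHom_pi_int : Countable ((ℕ → ℤ) →+ ℤ) :=
  Injective.countable (f := fun f => Finsupp.ofSupportFinite _ f.finite_support_map_single)
    fun _ _ h => AddMonoidHom.ext_pi_int fun n => DFunLike.congr_fun h n

theorem uncountable_addMonoidHom_finsupp_prod (B : Type*) [AddZeroClass B] :
    Uncountable (((ℕ →₀ ℤ) × B) →+ ℤ) := by
  have : Uncountable (ℕ → ℤ) := by
    rw [← not_countable_iff, ← Cardinal.mk_le_aleph0_iff, Cardinal.mk_arrow]
    simpa using Cardinal.aleph0_lt_continuum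
  refine Injective.uncountable (f := fun c : ℕ → ℤ =>
    (Finsupp.liftAddHom fun n => zmultiplesHom ℤ (c n)).comp (AddMonoidHom.fst _ B))
    fun c c' h => funext fun n => ?_
  simpa using DFunLike.congr_fun h (Finsupp.single n 1, 0)

/-- (⊕_ω ℤ) ⊕ ℤ^ω is not isomorphic to ℤ^ω. -/
theorem sum_plus_product_not_iso_product :
    IsEmpty (((ℕ →₀ ℤ) × (ℕ → ℤ)) ≃+ (ℕ → ℤ)) := by
  refine ⟨fun e => ?_⟩
  have := uncountable_addMonoidHom_finsupp_prod (ℕ → ℤ)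
  have := countable_addMonoidHom_pi_int
  exact not_countable (e.addMonoidHomCongrLeftEquiv (N := ℤ)).injective.countable
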